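/- arXiv:1310.5230 — 4 statements merged into one kernel-verified Lean document; each statement's English description precedes it below -/
import Mathlib

section
/- Let (Ω, μ) be a probability space, let ε and ε' be real numbers with 0 ≤ ε < ε', and let (U_n)_{n≥1} be a sequence of measurable subsets of Ω with μ(U_n) ≤ ε for every n. Then there exists a strictly increasing sequence of natural numbers 0 = k_0 < k_1 < k_2 < ⋯ such that the set V = ⋃_{j≥0} ⋂_{k_j < n ≤ k_{j+1}} U_n satisfies: (1) liminf_n U_n = ⋃_N ⋂_{n ≥ N} U_n ⊆ V, and (2) μ(V) ≤ ε'. -/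
open MeasureTheory Filter Topology
open scoped ENNReal

/-- Measure-theoretic core of Conidis' theorem (Theorem 2): given sets `U n` (for `n ≥ 1`)
of measure at most `ε`, there are cutoffs `0 = k 0 < k 1 < ⋯` such that the union of the
blockwise intersections covers `liminf U n` and has measure at most `ε'`. -/
theorem conidis_sets {Ω : Type*} [MeasurableSpace Ω] (μ : Measure Ω) [IsProbabilityMeasure μ]
    (ε ε' : ℝ) (hε : 0 ≤ ε) (hεε' : ε < ε')
    (U : ℕ → Set Ω) (hUmeas : ∀ n, MeasurableSet (U n))
    (hUε : ∀ n, 1 ≤ n → μ (U n) ≤ ENNReal.ofReal ε) :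
    ∃ k : ℕ → ℕ, k 0 = 0 ∧ StrictMono k ∧
      (⋃ N, ⋂ n, ⋂ (_ : N ≤ n), U n) ⊆ (⋃ j, ⋂ n ∈ Set.Ioc (k j) (k (j + 1)), U n) ∧
      μ (⋃ j, ⋂ n ∈ Set.Ioc (k j) (k (j + 1)), U n) ≤ ENNReal.ofReal ε' := by
  set δ : ℝ≥0∞ := ENNReal.ofReal (ε' - ε) with hδ
  have hδpos : 0 < δ := ENNReal.ofReal_pos.2 (by linarith)
  set A : ℕ → Set Ω := fun N => ⋂ n, ⋂ (_ : N < n), U n with hA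
  have hAmeas : ∀ N, MeasurableSet (A N) := fun N =>
    MeasurableSet.iInter fun n => MeasurableSet.iInter fun _ => hUmeas n
  have hAmono : Monotone A := by
    intro a b hab
    exact Set.iInter_mono fun n => Set.iInter_mono' fun h => ⟨lt_of_le_of_lt hab h, subset_rfl⟩
  have hAle : ∀ N, μ (A N) ≤ ENNReal.ofReal ε := by
    intro N
    refine le_trans (measure_mono ?_) (hUε (N + 1) (by omega))
    exact Set.iInter₂_subset (N + 1) (Nat.lt_succ_self N)
  -- key existence step
  have key : ∀ N : ℕ, ∀ j : ℕ, ∃ m : ℕ, N < m ∧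
      μ ((⋂ n ∈ Set.Ioc N m, U n) \ A N) ≤ δ * 2⁻¹ ^ (j + 1) := by
    intro N j
    set B : ℕ → Set Ω := fun m => (⋂ n ∈ Set.Ioc N m, U n) \ A N with hB
    have hBmeas : ∀ m, MeasurableSet (B m) :=
      fun m => ((MeasurableSet.biInter (Set.to_countable _) fun n _ => hUmeas n).diff (hAmeas N))
    have hBanti : Antitone B := by
      intro a b hab
      refine Set.diff_subset_diff_left ?_
      exact Set.biInter_mono (fun n hn => ⟨hn.1, hn.2.trans hab⟩) fun n _ => subset_rfl
    have hBempty : ⋂ m, B m = ∅ := by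
      ext x
      simp only [Set.mem_iInter, Set.mem_empty_iff_false, iff_false]
      intro hx
      have hxA : x ∈ A N := by
        simp only [hA, Set.mem_iInter]
        intro n hn
        have := (hx n).1
        simp only [Set.mem_iInter, Set.mem_Ioc] at this
        exact this n ⟨hn, le_refl n⟩
      exact (hx N).2 hxA
    have htend : Tendsto (μ ∘ B) atTop (𝓝 0) := by
      have := tendsto_measure_iInter_atTop (μ := μ)
        (fun m => (hBmeas m).nullMeasurableSet) hBanti ⟨0, measure_ne_top μ _⟩
      rwa [hBempty, measure_empty] at this
    have hpos : (0 : ℝ≥0∞) < δ * 2⁻¹ ^ (j + 1) := by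
      exact ENNReal.mul_pos hδpos.ne' (ENNReal.pow_pos (by norm_num) _).ne'
    obtain ⟨m, hm1, hm2⟩ :=
      ((htend.eventually_lt_const hpos).and (eventually_gt_atTop N)).exists
    exact ⟨m, hm2, hm1.le⟩
  choose f hf1 hf2 using key
  set k : ℕ → ℕ := fun j => Nat.rec 0 (fun j kj => f kj j) j with hk
  have hk0 : k 0 = 0 := rfl
  have hksucc : ∀ j, k (j + 1) = f (k j) j := fun j => rfl
  have hkmono : StrictMono k := strictMono_nat_of_lt_succ fun j => by
    rw [hksucc]; exact hf1 (k j) j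
  refine ⟨k, hk0, hkmono, ?_, ?_⟩
  · -- coverage
    intro x hx
    simp only [Set.mem_iUnion, Set.mem_iInter] at hx ⊢
    obtain ⟨N, hN⟩ := hx
    refine ⟨N, fun n hn => hN n ?_⟩
    have : N ≤ k N := hkmono.le_apply
    exact le_of_lt (lt_of_le_of_lt this hn.1)
  · -- measure bound
    have hsub : (⋃ j, ⋂ n ∈ Set.Ioc (k j) (k (j + 1)), U n) ⊆
        (⋃ j, A (k j)) ∪ ⋃ j, ((⋂ n ∈ Set.Ioc (k j) (k (j + 1)), U n) \ A (k j)) := by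
      intro x hx
      simp only [Set.mem_iUnion] at hx
      obtain ⟨j, hj⟩ := hx
      by_cases hxA : x ∈ A (k j)
      · exact Or.inl (Set.mem_iUnion.2 ⟨j, hxA⟩)
      · exact Or.inr (Set.mem_iUnion.2 ⟨j, hj, hxA⟩)
    refine le_trans (measure_mono hsub) ?_
    refine le_trans (measure_union_le _ _) ?_
    have h1 : μ (⋃ j, A (k j)) ≤ ENNReal.ofReal ε := by
      have hdir : Directed (· ⊆ ·) fun j => A (k j) := by
        intro a b
        rcases le_total a b with h | h
        · exact ⟨b, hAmono (hkmono.le_iff_le.2 h), subset_rfl⟩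
        · exact ⟨a, subset_rfl, hAmono (hkmono.le_iff_le.2 h)⟩
      rw [hdir.measure_iUnion]
      exact iSup_le fun j => hAle (k j)
    have h2 : μ (⋃ j, ((⋂ n ∈ Set.Ioc (k j) (k (j + 1)), U n) \ A (k j))) ≤ δ := by
      refine le_trans (measure_iUnion_le _) ?_
      have hle : ∀ j, μ ((⋂ n ∈ Set.Ioc (k j) (k (j + 1)), U n) \ A (k j)) ≤ δ * 2⁻¹ ^ (j + 1) :=
        fun j => by rw [hksucc]; exact hf2 (k j) j
      refine le_trans (ENNReal.tsum_le_tsum hle) ?_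
      have : ∑' j : ℕ, δ * 2⁻¹ ^ (j + 1) = δ * ∑' j : ℕ, 2⁻¹ ^ (j + 1) := by
        rw [ENNReal.tsum_mul_left]
      rw [this]
      have hgeo : ∑' j : ℕ, (2⁻¹ : ℝ≥0∞) ^ (j + 1) = 1 := by
        have : ∑' j : ℕ, (2⁻¹ : ℝ≥0∞) ^ (j + 1) = 2⁻¹ * ∑' j : ℕ, (2⁻¹ : ℝ≥0∞) ^ j := by
          simp_rw [pow_succ']
          rw [ENNReal.tsum_mul_left]
        rw [this, ENNReal.tsum_geometric, ENNReal.one_sub_inv_two]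
        exact ENNReal.mul_inv_cancel (by norm_num) (by norm_num)
      rw [hgeo, mul_one]
    calc μ (⋃ j, A (k j)) + μ (⋃ j, ((⋂ n ∈ Set.Ioc (k j) (k (j + 1)), U n) \ A (k j)))
        ≤ ENNReal.ofReal ε + δ := add_le_add h1 h2
      _ = ENNReal.ofReal ε' := by
          rw [hδ, ← ENNReal.ofReal_add hε (by linarith)]
          ring_nf
end

section
/- Let (Ω, μ) be a probability space, let ε and ε' be real numbers with 0 < ε < ε', and let (f_n)_{n≥1} be a sequence of measurable functions f_n : Ω → [0, ∞] with ∫ f_n dμ ≤ ε for every n. Then there exists a strictly increasing sequence of natural numbers 0 = k_0 < k_1 < k_2 < ⋯ such that the function φ(ω) = sup_{j≥0} min_{k_j < n ≤ k_{j+1}} f_n(ω) satisfies: (1) liminf_{n→∞} f_n(ω) ≤ φ(ω) for every ω ∈ Ω, and (2) ∫ φ dμ ≤ ε'. -/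
/-! Write `T K = ⨅ n > K, f n` for the tail infima, so that `liminf f = ⨆ K, T K`. For fixed `K`
the block minima `⨅ n ∈ (K, M], f n` decrease to `T K` as `M → ∞`, and `f (K + 1)` is integrable,
so by monotone convergence the gap `⨅ n ∈ (K, M], f n - T K` has integral below any `δ > 0` for
`M` large. Choosing `k (j + 1)` in this way from `k j` with `∑ δ j < ε' - ε`, every block minimum is
at most `liminf f` plus its gap, hence `φ ≤ liminf f + ∑ j, gap j`, and Fatou's lemma bounds
`∫ liminf f` by `ε`. -/

open MeasureTheory Filter Set
open scoped ENNReal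

section Lattice

variable {α : Type*} [CompleteLattice α]

lemma iInf_Ioi_le_liminf (u : ℕ → α) (K : ℕ) : ⨅ n ∈ Ioi K, u n ≤ liminf u atTop := by
  rw [liminf_eq_iSup_iInf_of_nat]
  exact le_iSup_of_le (K + 1) (le_iInf₂ fun n hn => iInf₂_le n (Nat.lt_of_succ_le hn))

lemma liminf_le_iSup_iInf_Ioc {k : ℕ → ℕ} (hk : StrictMono k) (u : ℕ → α) :
    liminf u atTop ≤ ⨆ j, ⨅ n ∈ Ioc (k j) (k (j + 1)), u n := by
  rw [liminf_eq_iSup_iInf_of_nat]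
  exact iSup_mono fun N => le_iInf₂ fun n hn => iInf₂_le n (hk.le_apply.trans hn.1.le)

lemma antitone_iInf_Ioc (u : ℕ → α) (K : ℕ) : Antitone fun M => ⨅ n ∈ Ioc K M, u n :=
  fun _ _ hMM' => biInf_mono fun _ hn => ⟨hn.1, hn.2.trans hMM'⟩

lemma iInf_iInf_Ioc_add_eq (u : ℕ → α) (K : ℕ) :
    ⨅ i, ⨅ n ∈ Ioc K (K + 1 + i), u n = ⨅ n ∈ Ioi K, u n := by
  refine le_antisymm (le_iInf₂ fun n hn => ?_) (le_iInf fun i => biInf_mono fun _ hn => hn.1)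
  exact iInf_le_of_le (n - K) (iInf₂_le n ⟨hn, by simp only [mem_Ioi] at hn; omega⟩)

end Lattice

lemma ENNReal.iSup_le_add_tsum_tsub {a t : ℕ → ℝ≥0∞} {L : ℝ≥0∞} (ht : ∀ j, t j ≤ L) :
    ⨆ j, a j ≤ L + ∑' j, (a j - t j) :=
  iSup_le fun j => le_add_tsub.trans (add_le_add (ht j) (ENNReal.le_tsum j))

section Blocks

variable {Ω : Type*} [MeasurableSpace Ω] {μ : Measure Ω} {f : ℕ → Ω → ℝ≥0∞}

lemma measurable_biInf_nat (hf : ∀ n, Measurable (f n)) (s : Set ℕ) :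
    Measurable fun ω => ⨅ n ∈ s, f n ω :=
  Measurable.biInf s (to_countable s) fun n _ => hf n

lemma exists_lintegral_iInf_Ioc_sub_iInf_Ioi_le (hf : ∀ n, Measurable (f n)) {K : ℕ}
    (hK : ∫⁻ ω, f (K + 1) ω ∂μ ≠ ∞) {δ : ℝ≥0∞} (hδ : δ ≠ 0) :
    ∃ M, K < M ∧ ∫⁻ ω, (⨅ n ∈ Ioc K M, f n ω) - ⨅ n ∈ Ioi K, f n ω ∂μ ≤ δ := by
  set m : ℕ → Ω → ℝ≥0∞ := fun i ω => ⨅ n ∈ Ioc K (K + 1 + i), f n ω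
  set T : Ω → ℝ≥0∞ := fun ω => ⨅ n ∈ Ioi K, f n ω
  have hm_meas (i : ℕ) : Measurable (m i) := measurable_biInf_nat hf _
  have hm_anti : Antitone m := fun i i' hii' ω =>
    antitone_iInf_Ioc (f · ω) K (by omega : K + 1 + i ≤ K + 1 + i')
  have hm_zero : m 0 = f (K + 1) := by
    ext ω
    refine le_antisymm (iInf₂_le _ ⟨K.lt_succ_self, le_rfl⟩) (le_iInf₂ fun n hn => ?_)
    rw [show n = K + 1 by simp only [add_zero, mem_Ioc] at hn; omega]
  have hT_eq : ∫⁻ ω, T ω ∂μ = ⨅ i, ∫⁻ ω, m i ω ∂μ := by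
    rw [← lintegral_iInf hm_meas hm_anti (hm_zero ▸ hK)]
    exact lintegral_congr fun ω => (iInf_iInf_Ioc_add_eq (f · ω) K).symm
  have hT_fin : ∫⁻ ω, T ω ∂μ ≠ ∞ :=
    ne_top_of_le_ne_top hK (hT_eq ▸ hm_zero ▸ iInf_le _ 0)
  obtain ⟨i, hi⟩ : ∃ i, ∫⁻ ω, m i ω ∂μ < ∫⁻ ω, T ω ∂μ + δ :=
    iInf_lt_iff.1 (hT_eq ▸ ENNReal.lt_add_right hT_fin hδ)
  refine ⟨K + 1 + i, by omega, ?_⟩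
  rw [lintegral_sub (measurable_biInf_nat hf _) hT_fin
    (ae_of_all _ fun ω => biInf_mono fun _ hn => hn.1)]
  exact tsub_le_iff_left.2 hi.le

lemma exists_strictMono_lintegral_iInf_Ioc_sub_iInf_Ioi_le (hf : ∀ n, Measurable (f n))
    (hfin : ∀ n, 1 ≤ n → ∫⁻ ω, f n ω ∂μ ≠ ∞) {δ : ℕ → ℝ≥0∞} (hδ : ∀ j, δ j ≠ 0) :
    ∃ k : ℕ → ℕ, k 0 = 0 ∧ StrictMono k ∧ ∀ j,
      ∫⁻ ω, (⨅ n ∈ Ioc (k j) (k (j + 1)), f n ω) - ⨅ n ∈ Ioi (k j), f n ω ∂μ ≤ δ j := by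
  choose next hnext using fun j K =>
    exists_lintegral_iInf_Ioc_sub_iInf_Ioi_le hf (hfin (K + 1) K.succ_pos) (hδ j)
  let k : ℕ → ℕ := fun j => Nat.rec 0 next j
  exact ⟨k, rfl, strictMono_nat_of_lt_succ fun j => (hnext j (k j)).1,
    fun j => (hnext j (k j)).2⟩

theorem exists_strictMono_lintegral_iSup_iInf_Ioc_le (hf : ∀ n, Measurable (f n))
    (hfin : ∀ n, 1 ≤ n → ∫⁻ ω, f n ω ∂μ ≠ ∞) {η : ℝ≥0∞} (hη : η ≠ 0) :
    ∃ k : ℕ → ℕ, k 0 = 0 ∧ StrictMono k ∧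
      ∫⁻ ω, (⨆ j, ⨅ n ∈ Ioc (k j) (k (j + 1)), f n ω) ∂μ ≤
        ∫⁻ ω, liminf (fun n => f n ω) atTop ∂μ + η := by
  obtain ⟨δ, hδ_pos, hδ_sum⟩ := ENNReal.exists_pos_sum_of_countable' hη ℕ
  obtain ⟨k, hk0, hk, hgap⟩ :=
    exists_strictMono_lintegral_iInf_Ioc_sub_iInf_Ioi_le hf hfin fun j => (hδ_pos j).ne'
  refine ⟨k, hk0, hk, ?_⟩
  have hgap_meas (j : ℕ) : Measurable fun ω =>
      (⨅ n ∈ Ioc (k j) (k (j + 1)), f n ω) - ⨅ n ∈ Ioi (k j), f n ω :=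
    (measurable_biInf_nat hf _).sub (measurable_biInf_nat hf _)
  calc ∫⁻ ω, (⨆ j, ⨅ n ∈ Ioc (k j) (k (j + 1)), f n ω) ∂μ
      ≤ ∫⁻ ω, liminf (fun n => f n ω) atTop +
          ∑' j, ((⨅ n ∈ Ioc (k j) (k (j + 1)), f n ω) - ⨅ n ∈ Ioi (k j), f n ω) ∂μ :=
        lintegral_mono fun ω =>
          ENNReal.iSup_le_add_tsum_tsub fun j => iInf_Ioi_le_liminf (f · ω) (k j)
    _ = ∫⁻ ω, liminf (fun n => f n ω) atTop ∂μ +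
          ∑' j, ∫⁻ ω, (⨅ n ∈ Ioc (k j) (k (j + 1)), f n ω) - ⨅ n ∈ Ioi (k j), f n ω ∂μ := by
        rw [lintegral_add_left (Measurable.liminf hf),
          lintegral_tsum fun j => (hgap_meas j).aemeasurable]
    _ ≤ ∫⁻ ω, liminf (fun n => f n ω) atTop ∂μ + η :=
        add_le_add_right ((ENNReal.tsum_le_tsum hgap).trans hδ_sum.le) _

end Blocks

theorem conidis_functions_general {Ω : Type*} [MeasurableSpace Ω] (μ : Measure Ω)
    (ε ε' : ℝ) (hε : 0 < ε) (hεε' : ε < ε')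
    (f : ℕ → Ω → ℝ≥0∞) (hf : ∀ n, Measurable (f n))
    (hint : ∀ n, 1 ≤ n → ∫⁻ ω, f n ω ∂μ ≤ ENNReal.ofReal ε) :
    ∃ k : ℕ → ℕ, k 0 = 0 ∧ StrictMono k ∧
      (∀ ω, Filter.liminf (fun n => f n ω) Filter.atTop ≤
        ⨆ j, ⨅ n ∈ Set.Ioc (k j) (k (j + 1)), f n ω) ∧
      ∫⁻ ω, (⨆ j, ⨅ n ∈ Set.Ioc (k j) (k (j + 1)), f n ω) ∂μ ≤ ENNReal.ofReal ε' := by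
  obtain ⟨k, hk0, hk, hφ⟩ := exists_strictMono_lintegral_iSup_iInf_Ioc_le hf
    (fun n hn => ne_top_of_le_ne_top ENNReal.ofReal_ne_top (hint n hn))
    (ENNReal.ofReal_pos.2 (sub_pos.2 hεε')).ne'
  refine ⟨k, hk0, hk, fun ω => liminf_le_iSup_iInf_Ioc hk _, hφ.trans ?_⟩
  have hfatou : ∫⁻ ω, liminf (fun n => f n ω) atTop ∂μ ≤ ENNReal.ofReal ε :=
    (lintegral_liminf_le hf).trans
      (liminf_le_of_frequently_le' (eventually_atTop.2 ⟨1, hint⟩).frequently)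
  calc _ ≤ ENNReal.ofReal ε + ENNReal.ofReal (ε' - ε) := add_le_add_left hfatou _
    _ = ENNReal.ofReal ε' := by
      rw [← ENNReal.ofReal_add hε.le (sub_nonneg.2 hεε'.le), add_sub_cancel]

/-- Measure-theoretic core of Theorem 3 (constructive Fatou lemma): given functions
`f n : Ω → [0,∞]` (for `n ≥ 1`) of integral at most `ε`, there are cutoffs
`0 = k 0 < k 1 < ⋯` such that `φ = ⨆ j, ⨅_{k j < n ≤ k (j+1)} f n` dominates
`liminf f n` pointwise and has integral at most `ε'`. -/
theorem conidis_functions {Ω : Type*} [MeasurableSpace Ω] (μ : Measure Ω)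
    [IsProbabilityMeasure μ]
    (ε ε' : ℝ) (hε : 0 < ε) (hεε' : ε < ε')
    (f : ℕ → Ω → ℝ≥0∞) (hf : ∀ n, Measurable (f n))
    (hint : ∀ n, 1 ≤ n → ∫⁻ ω, f n ω ∂μ ≤ ENNReal.ofReal ε) :
    ∃ k : ℕ → ℕ, k 0 = 0 ∧ StrictMono k ∧
      (∀ ω, Filter.liminf (fun n => f n ω) Filter.atTop ≤
        ⨆ j, ⨅ n ∈ Set.Ioc (k j) (k (j + 1)), f n ω) ∧
      ∫⁻ ω, (⨆ j, ⨅ n ∈ Set.Ioc (k j) (k (j + 1)), f n ω) ∂μ ≤ ENNReal.ofReal ε' :=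
  conidis_functions_general μ ε ε' hε hεε' f hf hint
end

section
/- Let (Ω, μ) be a probability space, let (f_n)_{n≥1} be a sequence of measurable functions f_n : Ω → [0, ∞] such that C := Σ_{n≥1} ∫ f_n dμ is finite, and let ε > 0 be a real number. Then there exist a sequence of nonnegative reals (a_n)_{n≥1} with Σ_{n≥1} a_n ≤ C/ε and a measurable set W ⊆ Ω with μ(W) ≤ ε such that W contains every point ω for which there exists N with Σ_{n ≥ N} f_n(ω) > Σ_{n ≥ N} a_n. -/
/-!
Let `g N = ∑_{n ≥ N} f n`, so `∫ g 0 = C` and `∫ g N → 0`. A strict Markov inequality gives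
`μ {C/ε < g 0} < ε`; the remaining budget is split into `δ k` with `∑ δ k < ε - μ {C/ε < g 0}`,
and Markov gives cut points `M k` with `μ {2⁻ᵏ ≤ g (M k)} ≤ δ k`. The threshold
`u N = min (C/ε) (min {2⁻ᵏ | M k ≤ N})` decreases to `0`, so its increments `a n = u n - u (n+1)`
have tails `∑_{n ≥ N} a n = u N` and total at most `C/ε`. As `g` is antitone, `u N < g N ω`
puts `ω` in `{C/ε < g 0}` or in one of the sets `{2⁻ᵏ ≤ g (M k)}`, whose union is `W`.
-/

open MeasureTheory Filter Topology
open scoped ENNReal NNReal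

namespace ENNReal

theorem antitone_tsum_nat_add (f : ℕ → ℝ≥0∞) : Antitone fun N => ∑' n, f (N + n) := by
  intro N M hNM
  obtain ⟨d, rfl⟩ := Nat.exists_eq_add_of_le hNM
  simpa only [add_assoc] using
    ENNReal.tsum_comp_le_tsum_of_injective (add_right_injective d) fun n => f (N + n)

theorem sum_range_tsub_add_of_antitone {u : ℕ → ℝ≥0∞} (hu : Antitone u) (n : ℕ) :
    ∑ i ∈ Finset.range n, (u i - u (i + 1)) + u n = u 0 := by
  induction n with
  | zero => simp
  | succ n ih =>
    rw [Finset.sum_range_succ, add_assoc, tsub_add_cancel_of_le (hu n.le_succ), ih]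

theorem tsum_tsub_succ_of_antitone {u : ℕ → ℝ≥0∞} (hu : Antitone u) (h0 : u 0 ≠ ∞)
    (hlim : Tendsto u atTop (𝓝 0)) : ∑' n, (u n - u (n + 1)) = u 0 := by
  have hpartial (n : ℕ) : ∑ i ∈ Finset.range n, (u i - u (i + 1)) = u 0 - u n :=
    ENNReal.eq_sub_of_add_eq (ne_top_of_le_ne_top h0 (hu n.zero_le))
      (sum_range_tsub_add_of_antitone hu n)
  refine tendsto_nhds_unique ENNReal.summable.hasSum.tendsto_sum_nat ?_
  simpa only [hpartial, tsub_zero] using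
    ENNReal.Tendsto.sub tendsto_const_nhds hlim (Or.inl h0)

theorem tsum_coe_toNNReal_tsub_succ_nat_add {u : ℕ → ℝ≥0∞} (hu : Antitone u) (h0 : u 0 ≠ ∞)
    (hlim : Tendsto u atTop (𝓝 0)) (N : ℕ) :
    ∑' n, ((u (N + n) - u (N + n + 1)).toNNReal : ℝ≥0∞) = u N := by
  have hfin (n : ℕ) : u n - u (n + 1) ≠ ∞ :=
    ne_top_of_le_ne_top (ne_top_of_le_ne_top h0 (hu n.zero_le)) tsub_le_self
  simp_rw [ENNReal.coe_toNNReal (hfin _)]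
  exact tsum_tsub_succ_of_antitone (hu.comp_monotone fun _ _ h => Nat.add_le_add_left h N)
    (ne_top_of_le_ne_top h0 (hu N.zero_le))
    (hlim.comp (tendsto_atTop_mono (Nat.le_add_left · N) tendsto_id))

end ENNReal

noncomputable def stepThreshold (c : ℝ≥0∞) (M : ℕ → ℕ) (t : ℕ → ℝ≥0∞) (N : ℕ) : ℝ≥0∞ :=
  c ⊓ ⨅ (k) (_ : M k ≤ N), t k

section stepThreshold

variable {c : ℝ≥0∞} {M : ℕ → ℕ} {t : ℕ → ℝ≥0∞}

theorem stepThreshold_le_left (N : ℕ) : stepThreshold c M t N ≤ c := inf_le_left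

theorem stepThreshold_le {N k : ℕ} (hk : M k ≤ N) : stepThreshold c M t N ≤ t k :=
  inf_le_right.trans (biInf_le t hk)

theorem antitone_stepThreshold : Antitone (stepThreshold c M t) := fun _ _ hNN' =>
  inf_le_inf_left c (iInf_mono fun _ => iInf_mono' fun hk => ⟨hk.trans hNN', le_rfl⟩)

theorem tendsto_stepThreshold (ht : Tendsto t atTop (𝓝 0)) :
    Tendsto (stepThreshold c M t) atTop (𝓝 0) := by
  refine ENNReal.tendsto_nhds_zero.2 fun x hx => ?_
  obtain ⟨k, hk⟩ := (ENNReal.tendsto_nhds_zero.1 ht x hx).exists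
  exact eventually_atTop.2 ⟨M k, fun N hN => (stepThreshold_le hN).trans hk⟩

theorem stepThreshold_lt_iff {N : ℕ} {x : ℝ≥0∞} :
    stepThreshold c M t N < x ↔ c < x ∨ ∃ k, M k ≤ N ∧ t k < x := by
  simp only [stepThreshold, inf_lt_iff, iInf_lt_iff, exists_prop]

theorem lt_or_exists_le_of_stepThreshold_lt {g : ℕ → ℝ≥0∞} (hg : Antitone g) {N : ℕ}
    (h : stepThreshold c M t N < g N) : c < g 0 ∨ ∃ k, t k ≤ g (M k) := by
  rcases stepThreshold_lt_iff.1 h with hc | ⟨k, hk, htk⟩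
  · exact Or.inl (hc.trans_le (hg N.zero_le))
  · exact Or.inr ⟨k, htk.le.trans (hg hk)⟩

end stepThreshold

section Markov

variable {Ω : Type*} [MeasurableSpace Ω] {μ : Measure Ω}

theorem measure_lt_lt_of_lintegral_le_mul {g : Ω → ℝ≥0∞} (hg : Measurable g) {c ε : ℝ≥0∞}
    (hint : ∫⁻ ω, g ω ∂μ ≤ c * ε) (hfin : c * ε ≠ ∞) (hε : ε ≠ 0) :
    μ {ω | c < g ω} < ε := by
  set A := {ω | c < g ω}
  have hA : MeasurableSet A := measurableSet_lt measurable_const hg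
  by_contra! hεA
  have hcg : ∫⁻ _ in A, c ∂μ ≤ ∫⁻ ω in A, g ω ∂μ := setLIntegral_mono hg fun _ hω => le_of_lt hω
  have hgε : ∫⁻ ω in A, g ω ∂μ ≤ c * ε := (setLIntegral_le_lintegral A g).trans hint
  have hlt : ∫⁻ _ in A, c ∂μ < ∫⁻ ω in A, g ω ∂μ :=
    setLIntegral_strict_mono hA (pos_of_ne_zero hε |>.trans_le hεA).ne' hg
      (ne_top_of_le_ne_top hfin (hcg.trans hgε)) (ae_of_all _ fun _ hω => hω)
  rw [setLIntegral_const] at hlt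
  exact (hlt.trans_le hgε).not_ge (mul_le_mul_right hεA c)

theorem tendsto_measure_le_of_tendsto_lintegral {ι : Type*} {l : Filter ι}
    {g : ι → Ω → ℝ≥0∞} (hg : ∀ i, AEMeasurable (g i) μ)
    (hlim : Tendsto (fun i => ∫⁻ ω, g i ω ∂μ) l (𝓝 0)) {t : ℝ≥0∞} (ht0 : t ≠ 0) (ht : t ≠ ∞) :
    Tendsto (fun i => μ {ω | t ≤ g i ω}) l (𝓝 0) := by
  have hdiv : Tendsto (fun i => (∫⁻ ω, g i ω ∂μ) / t) l (𝓝 0) := by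
    simpa only [ENNReal.zero_div] using ENNReal.Tendsto.div_const hlim (Or.inr ht0)
  exact tendsto_of_tendsto_of_tendsto_of_le_of_le tendsto_const_nhds hdiv (fun _ => zero_le)
    fun i => meas_ge_le_lintegral_div (hg i) ht0 ht

theorem exists_forall_measure_le_le_of_tendsto_lintegral {g : ℕ → Ω → ℝ≥0∞}
    (hg : ∀ N, AEMeasurable (g N) μ) (hlim : Tendsto (fun N => ∫⁻ ω, g N ω ∂μ) atTop (𝓝 0))
    {t δ : ℕ → ℝ≥0∞} (ht0 : ∀ k, t k ≠ 0) (ht : ∀ k, t k ≠ ∞) (hδ : ∀ k, 0 < δ k) :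
    ∃ M : ℕ → ℕ, ∀ k, μ {ω | t k ≤ g (M k) ω} ≤ δ k := by
  choose M hM using fun k =>
    ((tendsto_measure_le_of_tendsto_lintegral hg hlim (ht0 k) (ht k)).eventually_le_const
      (hδ k)).exists
  exact ⟨M, hM⟩

theorem tendsto_lintegral_tsum_nat_add {f : ℕ → Ω → ℝ≥0∞} (hf : ∀ n, AEMeasurable (f n) μ)
    (hfin : ∑' n, ∫⁻ ω, f n ω ∂μ ≠ ∞) :
    Tendsto (fun N => ∫⁻ ω, ∑' n, f (N + n) ω ∂μ) atTop (𝓝 0) := by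
  have htail (N : ℕ) : ∫⁻ ω, ∑' n, f (N + n) ω ∂μ = ∑' n, ∫⁻ ω, f (n + N) ω ∂μ := by
    simp_rw [lintegral_tsum fun n => hf (N + n), add_comm N]
  simpa only [htail] using ENNReal.tendsto_sum_nat_add _ hfin

end Markov

theorem slow_convergence_cover_general {Ω : Type*} [MeasurableSpace Ω] (μ : Measure Ω)
    (f : ℕ → Ω → ℝ≥0∞) (hf : ∀ n, Measurable (f n))
    (C : ℝ≥0∞) (hC : C = ∑' n, ∫⁻ ω, f n ω ∂μ) (hCfin : C ≠ ⊤)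
    (ε : ℝ) (hε : 0 < ε) :
    ∃ (a : ℕ → ℝ≥0) (W : Set Ω), MeasurableSet W ∧
      (∑' n, (a n : ℝ≥0∞)) ≤ C / ENNReal.ofReal ε ∧
      μ W ≤ ENNReal.ofReal ε ∧
      ∀ ω, (∃ N, (∑' n, (a (N + n) : ℝ≥0∞)) < ∑' n, f (N + n) ω) → ω ∈ W := by
  set g : ℕ → Ω → ℝ≥0∞ := fun N ω => ∑' n, f (N + n) ω
  set E := ENNReal.ofReal ε
  set c := C / E
  have hE0 : E ≠ 0 := (ENNReal.ofReal_pos.2 hε).ne'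
  have hg (N : ℕ) : Measurable (g N) := Measurable.tsum fun n => hf (N + n)
  have hCc : C = c * E := (ENNReal.div_mul_cancel hE0 ENNReal.ofReal_ne_top).symm
  set A := {ω | c < g 0 ω}
  have hA : μ A < E := by
    refine measure_lt_lt_of_lintegral_le_mul (hg 0) ?_ (hCc ▸ hCfin) hE0
    simp only [g, zero_add, lintegral_tsum fun n => (hf n).aemeasurable, ← hC, ← hCc, le_rfl]
  obtain ⟨δ, hδ0, hδ⟩ := ENNReal.exists_pos_sum_of_countable' (tsub_pos_of_lt hA).ne' ℕ
  set t : ℕ → ℝ≥0∞ := fun k => 2⁻¹ ^ k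
  obtain ⟨M, hM⟩ := exists_forall_measure_le_le_of_tendsto_lintegral
    (fun N => (hg N).aemeasurable)
    (tendsto_lintegral_tsum_nat_add (fun n => (hf n).aemeasurable) (hC ▸ hCfin))
    (t := t) (by simp [t]) (by simp [t]) hδ0
  set u := stepThreshold c M t
  have hsum := ENNReal.tsum_coe_toNNReal_tsub_succ_nat_add antitone_stepThreshold
    (ne_top_of_le_ne_top (ENNReal.div_ne_top hCfin hE0) (stepThreshold_le_left 0))
    (tendsto_stepThreshold (ENNReal.tendsto_pow_atTop_nhds_zero_of_lt_one
      (ENNReal.inv_lt_one.2 ENNReal.one_lt_two)) : Tendsto u atTop (𝓝 0))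
  refine ⟨fun n => (u n - u (n + 1)).toNNReal, A ∪ ⋃ k, {ω | t k ≤ g (M k) ω}, ?_, ?_, ?_, ?_⟩
  · exact (measurableSet_lt measurable_const (hg 0) : MeasurableSet A).union
      (MeasurableSet.iUnion fun k => measurableSet_le measurable_const (hg (M k)))
  · simpa only [zero_add] using (hsum 0).trans_le (stepThreshold_le_left 0)
  · calc μ (A ∪ ⋃ k, {ω | t k ≤ g (M k) ω})
        ≤ μ A + ∑' k, μ {ω | t k ≤ g (M k) ω} :=
          (measure_union_le _ _).trans (by gcongr; exact measure_iUnion_le _)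
      _ ≤ μ A + (E - μ A) := by gcongr; exact (ENNReal.tsum_le_tsum hM).trans hδ.le
      _ = E := add_tsub_cancel_of_le hA.le
  · rintro ω ⟨N, hN⟩
    rw [hsum N] at hN
    simpa only [A, Set.mem_union, Set.mem_ofPred_eq, Set.mem_iUnion] using
      lt_or_exists_le_of_stepThreshold_lt (ENNReal.antitone_tsum_nat_add fun n => f n ω) hN

/-- Measure-theoretic core of Lemma 2 (the slow-convergence covering lemma): if
`C = Σ_n ∫ f n dμ` is finite and `ε > 0`, then there are nonnegative reals `a n` with
`Σ_n a n ≤ C / ε` and a measurable set `W` of measure at most `ε` containing every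
point `ω` for which some tail of `Σ_n f n ω` exceeds the corresponding tail of `Σ_n a n`. -/
theorem slow_convergence_cover {Ω : Type*} [MeasurableSpace Ω] (μ : Measure Ω)
    [IsProbabilityMeasure μ]
    (f : ℕ → Ω → ℝ≥0∞) (hf : ∀ n, Measurable (f n))
    (C : ℝ≥0∞) (hC : C = ∑' n, ∫⁻ ω, f n ω ∂μ) (hCfin : C ≠ ⊤)
    (ε : ℝ) (hε : 0 < ε) :
    ∃ (a : ℕ → ℝ≥0) (W : Set Ω), MeasurableSet W ∧
      (∑' n, (a n : ℝ≥0∞)) ≤ C / ENNReal.ofReal ε ∧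
      μ W ≤ ENNReal.ofReal ε ∧
      ∀ ω, (∃ N, (∑' n, (a (N + n) : ℝ≥0∞)) < ∑' n, f (N + n) ω) → ω ∈ W :=
  slow_convergence_cover_general μ f hf C hC hCfin ε hε
end

section
/- Let Ω be the Cantor space {0,1}^ℕ equipped with the uniform fair-coin product probability measure P, let λ be Lebesgue measure on [0, ∞), and let ν = P ⊗ λ be the product measure on Ω × [0, ∞). Let (g_n)_{n≥1} be a sequence of measurable functions g_n : Ω × [0, ∞) → [0, ∞] such that C := Σ_{n≥1} ∫ g_n dν is finite. Then there exist a sequence of nonnegative reals (a_n)_{n≥1} with Σ_{n≥1} a_n < ∞ and a measurable set W ⊆ Ω × [0, ∞) with ν(W) < ∞ such that W contains every point z for which there exists N with Σ_{n ≥ N} g_n(z) > Σ_{n ≥ N} a_n. -/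
/-!
Let `c n = ∫ g n dν` and let `s N` be the tails of `∑ c n`. Then `T N = √(s N)` decreases to `0`
while `c n / T n ≤ 2 (T n - T (n + 1))` is still summable. Take `a n = T n - T (n + 1)`, whose
tail sums are exactly `T N`, and `W = {z | 1 < ∑ g n z / T n}`. Markov's inequality gives
`ν W ≤ ∑ c n / T n < ∞`, and since `T` decreases, `∑_{n ≥ N} g n z > T N` forces `z ∈ W`.
-/

open MeasureTheory Filter Topology
open scoped ENNReal NNReal

namespace NNReal

lemma hasSum_sub_succ_add {f : ℕ → ℝ≥0} (hf : Antitone f) (hf0 : Tendsto f atTop (𝓝 0))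
    (N : ℕ) : HasSum (fun n => f (N + n) - f (N + n + 1)) (f N) := by
  have partial_sum :
      ∀ M, ∑ n ∈ Finset.range M, (f (N + n) - f (N + n + 1)) = f N - f (N + M) := by
    intro M
    induction M with
    | zero => simp
    | succ M ih =>
      rw [Finset.sum_range_succ, ih, ← add_assoc]
      exact tsub_add_tsub_cancel (hf (Nat.le_add_right N M)) (hf (Nat.le_succ _))
  have tail_lim : Tendsto (fun M => f (N + M)) atTop (𝓝 0) := by
    simpa only [add_comm N] using (tendsto_add_atTop_iff_nat N).2 hf0
  rw [NNReal.hasSum_iff_tendsto_nat]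
  simp_rw [partial_sum]
  simpa using tendsto_const_nhds.sub tail_lim

lemma div_sqrt_add_le (x y : ℝ≥0) : x / sqrt (x + y) ≤ 2 * (sqrt (x + y) - sqrt y) := by
  rcases eq_or_ne (x + y) 0 with hxy | hxy
  · simp [(add_eq_zero.1 hxy).1]
  rw [div_le_iff₀ (sqrt_pos.2 (pos_iff_ne_zero.2 hxy))]
  have hle : sqrt y ≤ sqrt (x + y) := sqrt_le_sqrt.2 le_add_self
  have hsq : x + sqrt y ^ 2 = sqrt (x + y) ^ 2 := by rw [sq_sqrt, sq_sqrt]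
  generalize sqrt (x + y) = a at hle hsq ⊢
  generalize sqrt y = b at hle hsq ⊢
  rw [← coe_le_coe]
  apply_fun ((↑) : ℝ≥0 → ℝ) at hsq
  push_cast [NNReal.coe_sub hle] at hsq ⊢
  -- `x = a² - b² = (a - b)(a + b) ≤ 2 (a - b) a`
  nlinarith [coe_le_coe.2 hle, b.coe_nonneg]

lemma summable_sub_succ {f : ℕ → ℝ≥0} (hf : Antitone f) (hf0 : Tendsto f atTop (𝓝 0)) :
    Summable fun n => f n - f (n + 1) := by
  simpa using (hasSum_sub_succ_add hf hf0 0).summable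

lemma exists_antitone_tendsto_zero_summable_div {c : ℕ → ℝ≥0} (hc : Summable c) :
    ∃ T : ℕ → ℝ≥0, Antitone T ∧ Tendsto T atTop (𝓝 0) ∧ (∀ n, T n ≠ 0) ∧
      Summable fun n => c n / T n := by
  -- the geometric term keeps every tail sum, hence every `T n`, positive
  set d : ℕ → ℝ≥0 := fun n => c n + 2⁻¹ ^ n
  have hd : Summable d := hc.add (summable_geometric (by norm_num))
  set s : ℕ → ℝ≥0 := fun N => ∑' n, d (n + N)
  have hs_succ : ∀ N, s N = d N + s (N + 1) := by
    intro N
    simp only [s, sum_add_tsum_nat_add 1 ((summable_nat_add_iff N).2 hd), Finset.sum_range_one,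
      zero_add, add_right_comm _ 1 N, add_assoc]
  have hs_anti : Antitone s := antitone_nat_of_succ_le fun N => (hs_succ N).symm ▸ le_add_self
  set T : ℕ → ℝ≥0 := fun N => sqrt (s N)
  have hT_anti : Antitone T := fun m n h => sqrt_le_sqrt.2 (hs_anti h)
  have hT_lim : Tendsto T atTop (𝓝 0) := by
    have h := (continuous_sqrt.tendsto 0).comp (tendsto_sum_nat_add d)
    rwa [sqrt_zero] at h
  refine ⟨T, hT_anti, hT_lim, fun N => ?_,
    NNReal.summable_of_le (fun n => ?_) ((summable_sub_succ hT_anti hT_lim).mul_left 2)⟩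
  · rw [Ne, sqrt_eq_zero, hs_succ]
    exact (by positivity : 0 < c N + 2⁻¹ ^ N + s (N + 1)).ne'
  · calc c n / T n ≤ d n / sqrt (s n) := div_le_div_of_nonneg_right le_self_add zero_le
      _ ≤ 2 * (sqrt (s n) - sqrt (s (n + 1))) := by
          rw [hs_succ n]
          exact div_sqrt_add_le _ _

end NNReal

lemma ENNReal.one_lt_tsum_div_of_lt_tsum_add {f T : ℕ → ℝ≥0∞} (hT : Antitone T) {N : ℕ}
    (h : T N < ∑' n, f (N + n)) : 1 < ∑' n, f n / T n :=
  calc 1 < (∑' n, f (N + n)) / T N := by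
        rwa [ENNReal.lt_div_iff_mul_lt (.inr ENNReal.one_ne_top) (.inr one_ne_zero), one_mul]
    _ = ∑' n, f (N + n) / T N := ENNReal.tsum_mul_right.symm
    _ ≤ ∑' n, f (N + n) / T (N + n) :=
        ENNReal.tsum_le_tsum fun n => ENNReal.div_le_div_left (hT (Nat.le_add_right N n)) _
    _ ≤ ∑' n, f n / T n :=
        ENNReal.tsum_comp_le_tsum_of_injective (add_right_injective N) fun n => f n / T n

lemma MeasureTheory.measure_one_lt_tsum_le_tsum_lintegral {α : Type*} [MeasurableSpace α]
    {μ : Measure α} {f : ℕ → α → ℝ≥0∞} (hf : ∀ n, AEMeasurable (f n) μ) :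
    μ {x | 1 < ∑' n, f n x} ≤ ∑' n, ∫⁻ x, f n x ∂μ :=
  calc μ {x | 1 < ∑' n, f n x} ≤ μ {x | 1 ≤ ∑' n, f n x} :=
        measure_mono <| Set.ofPred_subset_ofPred.2 fun _ => le_of_lt
    _ ≤ ∫⁻ x, ∑' n, f n x ∂μ := by
        simpa using mul_meas_ge_le_lintegral₀ (AEMeasurable.tsum hf) 1
    _ = ∑' n, ∫⁻ x, f n x ∂μ := lintegral_tsum hf

theorem slow_convergence_cover_cantor_halfline_general
    (P : Measure (ℕ → Bool))
    (g : ℕ → (ℕ → Bool) × ℝ → ℝ≥0∞) (hg : ∀ n, Measurable (g n))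
    (C : ℝ≥0∞)
    (hC : C = ∑' n, ∫⁻ z, g n z ∂(P.prod ((volume : Measure ℝ).restrict (Set.Ici 0))))
    (hCfin : C ≠ ⊤) :
    ∃ (a : ℕ → ℝ≥0) (W : Set ((ℕ → Bool) × ℝ)), MeasurableSet W ∧ Summable a ∧
      (P.prod ((volume : Measure ℝ).restrict (Set.Ici 0))) W < ⊤ ∧
      ∀ z, (∃ N, (∑' n, (a (N + n) : ℝ≥0∞)) < ∑' n, g (N + n) z) → z ∈ W := by
  set ν := P.prod ((volume : Measure ℝ).restrict (Set.Ici 0))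
  set c : ℕ → ℝ≥0∞ := fun n => ∫⁻ z, g n z ∂ν
  have hc : ∑' n, c n ≠ ⊤ := hC ▸ hCfin
  obtain ⟨T, hT_anti, hT_lim, hT_ne, hT_sum⟩ :=
    NNReal.exists_antitone_tendsto_zero_summable_div (ENNReal.summable_toNNReal_of_tsum_ne_top hc)
  have hgT : ∀ n, Measurable fun z => g n z / T n := fun n => (hg n).div_const _
  refine ⟨fun n => T n - T (n + 1), {z | 1 < ∑' n, g n z / T n},
    measurableSet_lt measurable_const (Measurable.tsum hgT),
    NNReal.summable_sub_succ hT_anti hT_lim, ?_, ?_⟩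
  · calc ν {z | 1 < ∑' n, g n z / T n} ≤ ∑' n, ∫⁻ z, g n z / T n ∂ν :=
          measure_one_lt_tsum_le_tsum_lintegral fun n => (hgT n).aemeasurable
      _ = ∑' n, (((c n).toNNReal / T n : ℝ≥0) : ℝ≥0∞) := by
          refine tsum_congr fun n => ?_
          rw [ENNReal.coe_div (hT_ne n), ENNReal.coe_toNNReal (ENNReal.ne_top_of_tsum_ne_top hc n)]
          exact lintegral_mul_const _ (hg n)
      _ < ⊤ := (ENNReal.tsum_coe_ne_top_iff_summable.2 hT_sum).lt_top
  · rintro z ⟨N, hN⟩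
    rw [(ENNReal.hasSum_coe.2 (NNReal.hasSum_sub_succ_add hT_anti hT_lim N)).tsum_eq] at hN
    exact ENNReal.one_lt_tsum_div_of_lt_tsum_add (fun m n h => ENNReal.coe_le_coe.2 (hT_anti h)) hN

/-- Measure-theoretic core of Lemma 4, on the infinite-measure space `Ω × [0,∞)` where
`Ω` is Cantor space with the uniform fair-coin measure `P` (characterized by assigning
measure `2^{-|x|}` to each cylinder `xΩ`) and `[0,∞)` carries Lebesgue measure: if
`C = Σ_n ∫ g n dν` is finite (`ν = P ⊗ λ`), then there are nonnegative reals `a n` with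
`Σ_n a n < ∞` and a measurable set `W` of finite `ν`-measure containing every point `z`
for which some tail of `Σ_n g n z` exceeds the corresponding tail of `Σ_n a n`. -/
theorem slow_convergence_cover_cantor_halfline
    (P : Measure (ℕ → Bool)) [IsProbabilityMeasure P]
    (hP : ∀ x : List Bool,
      P {ω | ∀ i : Fin x.length, ω ↑i = x.get i} = (1 / 2 : ℝ≥0∞) ^ x.length)
    (g : ℕ → (ℕ → Bool) × ℝ → ℝ≥0∞) (hg : ∀ n, Measurable (g n))
    (C : ℝ≥0∞)
    (hC : C = ∑' n, ∫⁻ z, g n z ∂(P.prod ((volume : Measure ℝ).restrict (Set.Ici 0))))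
    (hCfin : C ≠ ⊤) :
    ∃ (a : ℕ → ℝ≥0) (W : Set ((ℕ → Bool) × ℝ)), MeasurableSet W ∧ Summable a ∧
      (P.prod ((volume : Measure ℝ).restrict (Set.Ici 0))) W < ⊤ ∧
      ∀ z, (∃ N, (∑' n, (a (N + n) : ℝ≥0∞)) < ∑' n, g (N + n) z) → z ∈ W :=
  slow_convergence_cover_cantor_halfline_general P g hg C hC hCfin
end
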